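/- The stabilizer in 𝐆_L = ∏_{1≤i≤r} GL(P_i) of the tuple (ξ₂, …, ξ_r) of canonical composition maps ξ_i : P_i ⊗ A_{i,i-1} → P_{i-1} is exactly the image of the group G_L under the embedding θ_L. That is, an element (γ₁, …, γ_r) ∈ ∏ GL(P_i) satisfies γ_{i-1} ∘ ξ_i = ξ_i ∘ (γ_i ⊗ id) for all 2 ≤ i ≤ r if and only if it equals θ_L(g) for some g ∈ G_L. -/

import Mathlib

/-!
If `γ = θ_L(g)`, then `γ` commutes with every `ξ_i` because the compositions are associative.
Conversely, given `γ` in the stabilizer, read off `g_j` and `u_{kj}` from the values of `γ_j` on the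
summand `M_j ⊗ A_{jj} = M_j ⊗ ℂ e_j` of `P_j`; by the right unit law `θ_{L,j}(g)` agrees with `γ_j`
there. Since `A_{j,i+1} ⊗ A_{i+1,i} → A_{ji}` is surjective, every other summand `M_j ⊗ A_{ji}` of
`P_i` lies in the image of `ξ_{i+1}`, so `γ_i = θ_{L,i}(g)` follows by descending induction on `i`.
Finally the diagonal block of `γ_j` is `g_j ⊗ id`, so surjectivity of `γ_j` makes `g_j` invertible.
-/

open Module
open scoped TensorProduct

noncomputable section

section Stab

variable (r : ℕ) (M : Fin (r + 1) → Type) (A : Fin (r + 1) → Fin (r + 1) → Type)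
  [∀ i, AddCommGroup (M i)] [∀ i, Module ℂ (M i)] [∀ i, FiniteDimensional ℂ (M i)]
  [∀ j i, AddCommGroup (A j i)] [∀ j i, Module ℂ (A j i)]
  [∀ j i, FiniteDimensional ℂ (A j i)]
  (cA : ∀ k j i : Fin (r + 1), A k j →ₗ[ℂ] A j i →ₗ[ℂ] A k i)

/-- `P i = ⊕_{i ≤ j} M j ⊗ A j i`. -/
abbrev P (i : Fin (r + 1)) : Type :=
  ∀ j : {j : Fin (r + 1) // i ≤ j}, M j.1 ⊗[ℂ] A j.1 i

/-- Given a (curried) pairing `c : Aj ⊗ A' → Aout`, the induced map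
`(Mj ⊗ Aj) ⊗ A' → Mj ⊗ Aout`, curried in the `A'` variable. -/
def mulRight {Mj Aj A' Aout : Type}
    [AddCommGroup Mj] [Module ℂ Mj] [AddCommGroup Aj] [Module ℂ Aj]
    [AddCommGroup A'] [Module ℂ A'] [AddCommGroup Aout] [Module ℂ Aout]
    (c : Aj →ₗ[ℂ] A' →ₗ[ℂ] Aout) :
    (Mj ⊗[ℂ] Aj) →ₗ[ℂ] A' →ₗ[ℂ] (Mj ⊗[ℂ] Aout) :=
  ((LinearMap.lTensorHom Mj (R := ℂ)).comp c.flip).flip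

/-- The canonical map `ξ_i : P_i ⊗ A_{i,i−1} → P_{i−1}` (curried in the second variable),
induced componentwise by the compositions `A_{ji} ⊗ A_{i,i−1} → A_{j,i−1}`. -/
def xi (i : Fin r) : P r M A i.succ →ₗ[ℂ] A i.succ i.castSucc →ₗ[ℂ] P r M A i.castSucc :=
  ∑ j : {j : Fin (r + 1) // i.succ ≤ j},
    ((LinearMap.llcomp ℂ (A i.succ i.castSucc) (M j.1 ⊗[ℂ] A j.1 i.castSucc)
        (P r M A i.castSucc)
        (LinearMap.single ℂ (fun j' : {j' : Fin (r + 1) // i.castSucc ≤ j'} =>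
          M j'.1 ⊗[ℂ] A j'.1 i.castSucc)
          ⟨j.1, le_trans (le_of_lt (Fin.castSucc_lt_succ : i.castSucc < i.succ)) j.2⟩)).comp
      (mulRight (cA j.1 i.succ i.castSucc))).comp (LinearMap.proj j)

/-- The embedding `θ_L` on the level of endomorphisms: given diagonal entries
`g i : M i →ₗ M i` and strictly-lower-triangular entries
`u j i : M i →ₗ M j ⊗ A j i` (for `i < j`), the induced endomorphism of `P i`. -/
def theta (g : ∀ i, M i →ₗ[ℂ] M i)
    (u : ∀ j i : Fin (r + 1), i < j → (M i →ₗ[ℂ] M j ⊗[ℂ] A j i))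
    (i : Fin (r + 1)) : P r M A i →ₗ[ℂ] P r M A i :=
  ∑ j : {j : Fin (r + 1) // i ≤ j},
    (((LinearMap.single ℂ (fun j' : {j' : Fin (r + 1) // i ≤ j'} =>
          M j'.1 ⊗[ℂ] A j'.1 i) j).comp
        (TensorProduct.map (g j.1) LinearMap.id)) +
      ∑ k : Fin (r + 1),
        if h : (j.1 : Fin (r + 1)) < k then
          (LinearMap.single ℂ (fun j' : {j' : Fin (r + 1) // i ≤ j'} =>
              M j'.1 ⊗[ℂ] A j'.1 i) ⟨k, le_trans j.2 (le_of_lt h)⟩).comp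
            ((TensorProduct.map LinearMap.id (TensorProduct.lift (cA k j.1 i))).comp
              (((TensorProduct.assoc ℂ (M k) (A k j.1) (A j.1 i)).toLinearMap).comp
                (TensorProduct.map (u k j.1 h) LinearMap.id)))
        else 0).comp (LinearMap.proj j)

end Stab

section TensorLemmas

variable {N N' C C' D : Type} [AddCommGroup N] [Module ℂ N] [AddCommGroup N'] [Module ℂ N']
  [AddCommGroup C] [Module ℂ C] [AddCommGroup C'] [Module ℂ C'] [AddCommGroup D] [Module ℂ D]

@[simp]
theorem mulRight_tmul (c : C →ₗ[ℂ] C' →ₗ[ℂ] D) (m : N) (a : C) (b : C') :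
    mulRight c (m ⊗ₜ[ℂ] a) b = m ⊗ₜ[ℂ] c a b := by
  simp [mulRight]

theorem mulRight_rTensor (c : C →ₗ[ℂ] C' →ₗ[ℂ] D) (f : N →ₗ[ℂ] N) (y : N ⊗[ℂ] C) (b : C') :
    mulRight c (f.rTensor C y) b = f.rTensor D (mulRight c y b) := by
  induction y using TensorProduct.induction_on with
  | zero => simp
  | tmul m a => simp
  | add x y hx hy => simp only [map_add, LinearMap.add_apply, hx, hy]

theorem lift_mulRight_surjective {c : C →ₗ[ℂ] C' →ₗ[ℂ] D}
    (hc : Function.Surjective (TensorProduct.lift c)) :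
    Function.Surjective (TensorProduct.lift (mulRight (Mj := N) c)) := by
  have h : TensorProduct.lift (mulRight (Mj := N) c) =
      (TensorProduct.lift c).lTensor N ∘ₗ (TensorProduct.assoc ℂ N C C').toLinearMap := by
    ext m a b
    simp
  rw [h, LinearMap.coe_comp, LinearEquiv.coe_coe]
  exact (LinearMap.lTensor_surjective N hc).comp (TensorProduct.assoc ℂ N C C').surjective

theorem mk_flip_surjective_of_forall_eq_smul {e : C} (he : ∀ x : C, ∃ c : ℂ, x = c • e) :
    Function.Surjective ((TensorProduct.mk ℂ N C).flip e) := by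
  intro w
  induction w using TensorProduct.induction_on with
  | zero => exact ⟨0, by simp⟩
  | tmul m a =>
    obtain ⟨c, rfl⟩ := he a
    exact ⟨c • m, by simp⟩
  | add x y hx hy =>
    obtain ⟨m, rfl⟩ := hx
    obtain ⟨m', rfl⟩ := hy
    exact ⟨m + m', map_add _ _ _⟩

theorem exists_linearMap_smul_eq_of_forall_eq_smul {e : C} (he : ∀ x : C, ∃ c : ℂ, x = c • e) :
    ∃ φ : C →ₗ[ℂ] ℂ, ∀ x, φ x • e = x := by
  obtain ⟨φ, hφ⟩ := LinearMap.exists_rightInverse_of_surjective (LinearMap.toSpanSingleton ℂ C e)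
    (LinearMap.range_eq_top.mpr fun x => (he x).imp fun c hc => hc.symm)
  exact ⟨φ, fun x => LinearMap.congr_fun hφ x⟩

theorem rid_lTensor_tmul_of_smul_eq {φ : C →ₗ[ℂ] ℂ} {e : C} (hφ : ∀ x, φ x • e = x) (w : N ⊗[ℂ] C) :
    TensorProduct.rid ℂ N (φ.lTensor N w) ⊗ₜ[ℂ] e = w := by
  induction w using TensorProduct.induction_on with
  | zero => simp
  | tmul m a => rw [LinearMap.lTensor_tmul, TensorProduct.rid_tmul, TensorProduct.smul_tmul, hφ]
  | add x y hx hy => simp only [map_add, TensorProduct.add_tmul, hx, hy]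

theorem LinearMap.surjective_of_rTensor_surjective {f : N →ₗ[ℂ] N'} {φ : C →ₗ[ℂ] ℂ} {e : C}
    (he : φ e = 1) (hf : Function.Surjective (f.rTensor C)) : Function.Surjective f := by
  have hnat : ∀ w : N ⊗[ℂ] C, TensorProduct.rid ℂ N' (φ.lTensor N' (f.rTensor C w)) =
      f (TensorProduct.rid ℂ N (φ.lTensor N w)) := by
    intro w
    induction w using TensorProduct.induction_on with
    | zero => simp
    | tmul m a => simp
    | add x y hx hy => simp only [map_add, hx, hy]
  intro m
  obtain ⟨w, hw⟩ := hf (m ⊗ₜ[ℂ] e)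
  exact ⟨_, by rw [← hnat, hw]; simp [he]⟩

end TensorLemmas

section Development

variable {r : ℕ} {M : Fin (r + 1) → Type} {A : Fin (r + 1) → Fin (r + 1) → Type}
  [∀ i, AddCommGroup (M i)] [∀ i, Module ℂ (M i)]
  [∀ j i, AddCommGroup (A j i)] [∀ j i, Module ℂ (A j i)]
  {cA : ∀ k j i : Fin (r + 1), A k j →ₗ[ℂ] A j i →ₗ[ℂ] A k i}

def lowerEntry {j k : Fin (r + 1)} (i : Fin (r + 1)) (v : M j →ₗ[ℂ] M k ⊗[ℂ] A k j) :
    M j ⊗[ℂ] A j i →ₗ[ℂ] M k ⊗[ℂ] A k i :=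
  TensorProduct.map LinearMap.id (TensorProduct.lift (cA k j i)) ∘ₗ
    (TensorProduct.assoc ℂ (M k) (A k j) (A j i)).toLinearMap ∘ₗ TensorProduct.map v LinearMap.id

theorem lowerEntry_tmul_unit {j k : Fin (r + 1)} {e : A j j} (he : ∀ a : A k j, cA k j j a e = a)
    (v : M j →ₗ[ℂ] M k ⊗[ℂ] A k j) (m : M j) :
    lowerEntry (cA := cA) j v (m ⊗ₜ[ℂ] e) = v m := by
  have key : ∀ w : M k ⊗[ℂ] A k j, TensorProduct.map LinearMap.id (TensorProduct.lift (cA k j j))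
      (TensorProduct.assoc ℂ (M k) (A k j) (A j j) (w ⊗ₜ[ℂ] e)) = w := by
    intro w
    induction w using TensorProduct.induction_on with
    | zero => simp
    | tmul n a => simp [he]
    | add x y hx hy => simp only [TensorProduct.add_tmul, map_add, hx, hy]
  simpa [lowerEntry] using key (v m)

theorem lowerEntry_mulRight
    (hassoc : ∀ l k j i : Fin (r + 1), ∀ (a : A l k) (b : A k j) (c : A j i),
      cA l j i (cA l k j a b) c = cA l k i a (cA k j i b c))
    {k j i' i : Fin (r + 1)} (v : M j →ₗ[ℂ] M k ⊗[ℂ] A k j) (y : M j ⊗[ℂ] A j i') (b : A i' i) :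
    lowerEntry (cA := cA) i v (mulRight (cA j i' i) y b) =
      mulRight (cA k i' i) (lowerEntry (cA := cA) i' v y) b := by
  induction y using TensorProduct.induction_on with
  | zero => simp
  | tmul m a =>
    have key : ∀ w : M k ⊗[ℂ] A k j, TensorProduct.map LinearMap.id (TensorProduct.lift (cA k j i))
          (TensorProduct.assoc ℂ (M k) (A k j) (A j i) (w ⊗ₜ[ℂ] cA j i' i a b)) =
        mulRight (cA k i' i) (TensorProduct.map LinearMap.id (TensorProduct.lift (cA k j i'))
          (TensorProduct.assoc ℂ (M k) (A k j) (A j i') (w ⊗ₜ[ℂ] a))) b := by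
      intro w
      induction w using TensorProduct.induction_on with
      | zero => simp
      | tmul n α => simp [hassoc k j i' i α a b]
      | add x y hx hy =>
        simp only [TensorProduct.add_tmul, map_add, LinearMap.add_apply, hx, hy]
    simpa [lowerEntry] using key (v m)
  | add x y hx hy => simp only [map_add, LinearMap.add_apply, hx, hy]

theorem xi_single (i : Fin r) {j : Fin (r + 1)} (h : i.succ ≤ j) (y : M j ⊗[ℂ] A j i.succ)
    (a : A i.succ i.castSucc) :
    xi r M A cA i (Pi.single ⟨j, h⟩ y) a =
      Pi.single ⟨j, i.castSucc_lt_succ.le.trans h⟩ (mulRight (cA j i.succ i.castSucc) y a) := by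
  rw [xi, LinearMap.sum_apply, LinearMap.sum_apply,
    Finset.sum_eq_single_of_mem ⟨j, h⟩ (Finset.mem_univ _)]
  · simp
  · intro b _ hb
    simp [Pi.single_eq_of_ne hb]

theorem theta_single (g : ∀ i, M i →ₗ[ℂ] M i)
    (u : ∀ j i : Fin (r + 1), i < j → (M i →ₗ[ℂ] M j ⊗[ℂ] A j i))
    {i j : Fin (r + 1)} (hij : i ≤ j) (y : M j ⊗[ℂ] A j i) :
    theta r M A cA g u i (Pi.single ⟨j, hij⟩ y) =
      Pi.single ⟨j, hij⟩ ((g j).rTensor (A j i) y) +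
        ∑ k : Fin (r + 1), if h : j < k then
          Pi.single ⟨k, hij.trans h.le⟩ (lowerEntry (cA := cA) i (u k j h) y) else 0 := by
  rw [theta, LinearMap.sum_apply, Finset.sum_eq_single_of_mem ⟨j, hij⟩ (Finset.mem_univ _)]
  · rw [LinearMap.comp_apply, LinearMap.proj_apply, Pi.single_eq_same, LinearMap.add_apply,
      LinearMap.sum_apply]
    congr 1
    refine Finset.sum_congr rfl fun k _ => ?_
    by_cases h : j < k
    · simp [h, lowerEntry]
    · simp [h]
  · intro b _ hb
    simp [Pi.single_eq_of_ne hb]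

theorem theta_apply (g : ∀ i, M i →ₗ[ℂ] M i)
    (u : ∀ j i : Fin (r + 1), i < j → (M i →ₗ[ℂ] M j ⊗[ℂ] A j i))
    {i : Fin (r + 1)} (x : P r M A i) (k : {k // i ≤ k}) :
    theta r M A cA g u i x k = (g k).rTensor (A k i) (x k) +
      ∑ j : {j // i ≤ j}, if h : j.1 < k.1 then lowerEntry (cA := cA) i (u k j h) (x j) else 0 := by
  simp only [theta, LinearMap.sum_apply, LinearMap.comp_apply, LinearMap.add_apply,
    Finset.sum_apply, Pi.add_apply, Finset.sum_add_distrib, LinearMap.coe_single,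
    LinearMap.coe_proj, Function.eval, Fintype.sum_pi_single]
  congr 1
  refine Finset.sum_congr rfl fun j _ => ?_
  rw [Finset.sum_eq_single k.1]
  · by_cases h : j.1 < k.1
    · simp [h, lowerEntry]
    · simp [h]
  · intro c _ hc
    by_cases h : j.1 < c
    · simp only [h, dite_true, LinearMap.comp_apply, LinearMap.coe_single]
      exact Pi.single_eq_of_ne (fun e => hc (congrArg Subtype.val e).symm) _
    · simp [h]
  · simp

theorem theta_apply_self (g : ∀ i, M i →ₗ[ℂ] M i)
    (u : ∀ j i : Fin (r + 1), i < j → (M i →ₗ[ℂ] M j ⊗[ℂ] A j i))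
    {i : Fin (r + 1)} (x : P r M A i) :
    theta r M A cA g u i x ⟨i, le_rfl⟩ = (g i).rTensor (A i i) (x ⟨i, le_rfl⟩) := by
  rw [theta_apply, add_eq_left]
  exact Finset.sum_eq_zero fun j _ => dif_neg j.2.not_gt

theorem theta_comp_xi
    (hassoc : ∀ l k j i : Fin (r + 1), ∀ (a : A l k) (b : A k j) (c : A j i),
      cA l j i (cA l k j a b) c = cA l k i a (cA k j i b c))
    (g : ∀ i, M i →ₗ[ℂ] M i) (u : ∀ j i : Fin (r + 1), i < j → (M i →ₗ[ℂ] M j ⊗[ℂ] A j i))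
    (i : Fin r) (a : A i.succ i.castSucc) :
    theta r M A cA g u i.castSucc ∘ₗ (xi r M A cA i).flip a =
      (xi r M A cA i).flip a ∘ₗ theta r M A cA g u i.succ := by
  refine LinearMap.pi_ext fun ⟨j, hj⟩ y => ?_
  simp only [LinearMap.comp_apply, LinearMap.flip_apply]
  rw [xi_single, theta_single, theta_single, map_add, LinearMap.add_apply, map_sum,
    LinearMap.sum_apply, xi_single, mulRight_rTensor]
  congr 1
  refine Finset.sum_congr rfl fun k _ => ?_
  by_cases hk : j < k
  · rw [dif_pos hk, dif_pos hk, xi_single, lowerEntry_mulRight hassoc]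
  · rw [dif_neg hk, dif_neg hk, map_zero, LinearMap.zero_apply]

theorem theta_congr {g g' : ∀ i, M i →ₗ[ℂ] M i}
    (u : ∀ j i : Fin (r + 1), i < j → (M i →ₗ[ℂ] M j ⊗[ℂ] A j i)) {i : Fin (r + 1)}
    (hg : ∀ j, i ≤ j →
      TensorProduct.map (g j) (LinearMap.id (M := A j i)) = TensorProduct.map (g' j) LinearMap.id) :
    theta r M A cA g u i = theta r M A cA g' u i :=
  Finset.sum_congr rfl fun j _ => by rw [hg j j.2]

variable (M) in
def diagEmb (e : ∀ i, A i i) (j : Fin (r + 1)) : M j →ₗ[ℂ] P r M A j :=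
  LinearMap.single ℂ (fun j' : {j' // j ≤ j'} => M j'.1 ⊗[ℂ] A j'.1 j) ⟨j, le_rfl⟩ ∘ₗ
    (TensorProduct.mk ℂ (M j) (A j j)).flip (e j)

def lowerPart (γ : ∀ i, P r M A i →ₗ[ℂ] P r M A i) (e : ∀ i, A i i) (k j : Fin (r + 1))
    (h : j < k) : M j →ₗ[ℂ] M k ⊗[ℂ] A k j :=
  LinearMap.proj (φ := fun j' : {j' // j ≤ j'} => M j'.1 ⊗[ℂ] A j'.1 j) ⟨k, h.le⟩ ∘ₗ
    γ j ∘ₗ diagEmb M e j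

-- `φ j` is a coordinate on `A j j = ℂ ∙ e j`, used to cancel `e j` from `M j ⊗ A j j`.
def diagPart (γ : ∀ i, P r M A i →ₗ[ℂ] P r M A i) (e : ∀ i, A i i) (φ : ∀ i, A i i →ₗ[ℂ] ℂ)
    (j : Fin (r + 1)) : M j →ₗ[ℂ] M j :=
  (TensorProduct.rid ℂ (M j)).toLinearMap ∘ₗ (φ j).lTensor (M j) ∘ₗ
    LinearMap.proj (φ := fun j' : {j' // j ≤ j'} => M j'.1 ⊗[ℂ] A j'.1 j) ⟨j, le_rfl⟩ ∘ₗ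
    γ j ∘ₗ diagEmb M e j

theorem theta_diagPart_lowerPart_comp_diagEmb {e : ∀ i, A i i}
    (hunitr : ∀ j i : Fin (r + 1), i ≤ j → ∀ a : A j i, cA j i i a (e i) = a)
    (γ : ∀ i, P r M A i →ₗ[ℂ] P r M A i) {φ : ∀ i, A i i →ₗ[ℂ] ℂ}
    (hφ : ∀ i x, φ i x • e i = x) (j : Fin (r + 1)) :
    theta r M A cA (diagPart γ e φ) (lowerPart γ e) j ∘ₗ diagEmb M e j = γ j ∘ₗ diagEmb M e j := by
  ext m ⟨k, hk⟩
  rw [LinearMap.comp_apply, LinearMap.comp_apply]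
  obtain rfl | hjk := hk.eq_or_lt
  · rw [theta_apply_self]
    simp only [diagEmb, LinearMap.comp_apply, LinearMap.coe_single, Pi.single_eq_same,
      LinearMap.flip_apply, TensorProduct.mk_apply, LinearMap.rTensor_tmul]
    exact rid_lTensor_tmul_of_smul_eq (hφ j) _
  · rw [theta_apply, Finset.sum_eq_single ⟨j, le_rfl⟩]
    · have hne : (⟨k, hk⟩ : {k // j ≤ k}) ≠ ⟨j, le_rfl⟩ := fun h => hjk.ne' (congrArg Subtype.val h)
      simp only [diagEmb, LinearMap.comp_apply, LinearMap.coe_single, Pi.single_eq_of_ne hne,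
        map_zero, zero_add, dif_pos hjk, Pi.single_eq_same, TensorProduct.mk_apply,
        LinearMap.flip_apply]
      exact lowerEntry_tmul_unit (hunitr k j hjk.le) _ m
    · intro i _ hi
      have hne : i ≠ ⟨j, le_rfl⟩ := hi
      simp [diagEmb, Pi.single_eq_of_ne hne]
    · simp

theorem eq_theta_of_comp_xi {e : ∀ i, A i i} (hspan : ∀ i (x : A i i), ∃ c : ℂ, x = c • e i)
    (hassoc : ∀ l k j i : Fin (r + 1), ∀ (a : A l k) (b : A k j) (c : A j i),
      cA l j i (cA l k j a b) c = cA l k i a (cA k j i b c))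
    (hsurj : ∀ k j i : Fin (r + 1), i ≤ j → j ≤ k →
      Function.Surjective ⇑(TensorProduct.lift (cA k j i)))
    {γ : ∀ i, P r M A i →ₗ[ℂ] P r M A i}
    (hγ : ∀ (i : Fin r) (a : A i.succ i.castSucc),
      γ i.castSucc ∘ₗ (xi r M A cA i).flip a = (xi r M A cA i).flip a ∘ₗ γ i.succ)
    {g : ∀ i, M i →ₗ[ℂ] M i} {u : ∀ j i : Fin (r + 1), i < j → (M i →ₗ[ℂ] M j ⊗[ℂ] A j i)}
    (hdiag : ∀ j, theta r M A cA g u j ∘ₗ diagEmb M e j = γ j ∘ₗ diagEmb M e j)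
    (i : Fin (r + 1)) : γ i = theta r M A cA g u i := by
  have hself : ∀ j, γ j ∘ₗ LinearMap.single ℂ _ ⟨j, le_rfl⟩ =
      theta r M A cA g u j ∘ₗ LinearMap.single ℂ _ ⟨j, le_rfl⟩ := fun j =>
    (LinearMap.cancel_right (mk_flip_surjective_of_forall_eq_smul (hspan j))).mp (hdiag j).symm
  suffices h : ∀ i (j : Fin (r + 1)) (hij : i ≤ j),
      γ i ∘ₗ LinearMap.single ℂ _ ⟨j, hij⟩ = theta r M A cA g u i ∘ₗ LinearMap.single ℂ _ ⟨j, hij⟩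
    from LinearMap.pi_ext' fun ⟨j, hij⟩ => h i j hij
  intro i
  induction i using Fin.reverseInduction with
  | last =>
    intro j hj
    obtain rfl := (Fin.le_last j).antisymm hj
    exact hself _
  | cast i ih =>
    intro j hj
    obtain rfl | hlt := hj.eq_or_lt
    · exact hself _
    have hj' : i.succ ≤ j := Fin.castSucc_lt_iff_succ_le.mp hlt
    refine (LinearMap.cancel_right (lift_mulRight_surjective (N := M j)
      (hsurj j i.succ i.castSucc i.castSucc_lt_succ.le hj'))).mp (TensorProduct.ext' fun y a => ?_)
    have hsingle := xi_single (cA := cA) i hj' y a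
    simp only [LinearMap.comp_apply, TensorProduct.lift.tmul, LinearMap.coe_single, ← hsingle]
    calc γ i.castSucc (xi r M A cA i (Pi.single ⟨j, hj'⟩ y) a)
        = xi r M A cA i (γ i.succ (Pi.single ⟨j, hj'⟩ y)) a := LinearMap.congr_fun (hγ i a) _
      _ = xi r M A cA i (theta r M A cA g u i.succ (Pi.single ⟨j, hj'⟩ y)) a := by
        rw [← LinearMap.coe_single ℂ, ← LinearMap.comp_apply (γ i.succ), ih j hj']
        rfl
      _ = theta r M A cA g u i.castSucc (xi r M A cA i (Pi.single ⟨j, hj'⟩ y) a) :=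
        (LinearMap.congr_fun (theta_comp_xi hassoc g u i a) _).symm

theorem bijective_of_theta_surjective {j : Fin (r + 1)} [FiniteDimensional ℂ (M j)]
    {g : ∀ i, M i →ₗ[ℂ] M i}
    {u : ∀ j i : Fin (r + 1), i < j → (M i →ₗ[ℂ] M j ⊗[ℂ] A j i)}
    {φ : A j j →ₗ[ℂ] ℂ} {e : A j j} (he : φ e = 1)
    (h : Function.Surjective (theta r M A cA g u j)) : Function.Bijective (g j) := by
  have hsurj : Function.Surjective (g j) := by
    refine LinearMap.surjective_of_rTensor_surjective he fun w => ?_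
    obtain ⟨x, hx⟩ := h (Pi.single ⟨j, le_rfl⟩ w)
    exact ⟨x ⟨j, le_rfl⟩, by rw [← theta_apply_self, hx, Pi.single_eq_same]⟩
  exact ⟨LinearMap.injective_iff_surjective.mpr hsurj, hsurj⟩

end Development

section Stab

variable (r : ℕ) (M : Fin (r + 1) → Type) (A : Fin (r + 1) → Fin (r + 1) → Type)
  [∀ i, AddCommGroup (M i)] [∀ i, Module ℂ (M i)] [∀ i, FiniteDimensional ℂ (M i)]
  [∀ j i, AddCommGroup (A j i)] [∀ j i, Module ℂ (A j i)]
  [∀ j i, FiniteDimensional ℂ (A j i)]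
  (cA : ∀ k j i : Fin (r + 1), A k j →ₗ[ℂ] A j i →ₗ[ℂ] A k i)

/-- The stabilizer in `𝐆_L = ∏ GL(P_i)` of the tuple `(ξ₂,…,ξ_r)` of canonical
composition maps is exactly the image of `G_L` under `θ_L`:  a tuple
`(γ₁,…,γ_r) ∈ ∏ GL(P_i)` satisfies `γ_{i−1} ∘ ξ_i = ξ_i ∘ (γ_i ⊗ id)` for all `i` if and
only if it equals `θ_L(g)` for some `g ∈ G_L` (i.e. some invertible diagonal entries
`g_i ∈ GL(M_i)` and arbitrary lower entries `u_{ji}`).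

Hypotheses: `A i i` is one-dimensional, spanned by a unit `eA i` for the associative
compositions `cA`, which are surjective for `i ≤ j ≤ k`. -/
theorem stmt1
    (eA : ∀ i, A i i)
    (hspan : ∀ i (x : A i i), ∃ c : ℂ, x = c • eA i)
    (hunitl : ∀ j i : Fin (r + 1), i ≤ j → ∀ a : A j i, cA j j i (eA j) a = a)
    (hunitr : ∀ j i : Fin (r + 1), i ≤ j → ∀ a : A j i, cA j i i a (eA i) = a)
    (hassoc : ∀ l k j i : Fin (r + 1), ∀ (a : A l k) (b : A k j) (c : A j i),
      cA l j i (cA l k j a b) c = cA l k i a (cA k j i b c))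
    (hsurj : ∀ k j i : Fin (r + 1), i ≤ j → j ≤ k →
      Function.Surjective ⇑(TensorProduct.lift (cA k j i)))
    (γ : ∀ i : Fin (r + 1), P r M A i ≃ₗ[ℂ] P r M A i) :
    (∀ (i : Fin r) (a : A i.succ i.castSucc),
        (γ i.castSucc).toLinearMap.comp ((xi r M A cA i).flip a) =
          ((xi r M A cA i).flip a).comp (γ i.succ).toLinearMap) ↔
      ∃ (g : ∀ i, M i ≃ₗ[ℂ] M i)
        (u : ∀ j i : Fin (r + 1), i < j → (M i →ₗ[ℂ] M j ⊗[ℂ] A j i)),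
        ∀ i, (γ i).toLinearMap =
          theta r M A cA (fun i => (g i).toLinearMap) u i := by
  classical
  constructor
  · intro hγ
    choose φ hφ using fun j => exists_linearMap_smul_eq_of_forall_eq_smul (hspan j)
    set G := diagPart (fun i => (γ i).toLinearMap) eA φ
    set U := lowerPart (fun i => (γ i).toLinearMap) eA
    have hγθ : ∀ i, (γ i).toLinearMap = theta r M A cA G U i :=
      eq_theta_of_comp_xi hspan hassoc hsurj hγ
        (theta_diagPart_lowerPart_comp_diagEmb hunitr _ hφ)
    have hG : ∀ j, eA j ≠ 0 → Function.Bijective (G j) := fun j he =>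
      bijective_of_theta_surjective
        (smul_left_injective ℂ he ((hφ j (eA j)).trans (one_smul ℂ _).symm))
        (by rw [← hγθ]; exact (γ j).surjective)
    let g j : M j ≃ₗ[ℂ] M j :=
      if h : eA j = 0 then LinearEquiv.refl ℂ (M j) else LinearEquiv.ofBijective (G j) (hG j h)
    refine ⟨g, U, fun i => (hγθ i).trans (theta_congr U fun j hij => ?_)⟩
    by_cases h : eA j = 0
    -- the left unit law then kills `A j i`, so `g j` does not enter `θ_{L,i}`
    · have : Subsingleton (A j i) :=
        ⟨fun a b => by rw [← hunitl j i hij a, ← hunitl j i hij b, h]; simp⟩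
      exact LinearMap.ext fun _ => Subsingleton.elim _ _
    · simp only [g, dif_neg h]
      rfl
  · rintro ⟨g, u, hgu⟩ i a
    rw [hgu, hgu]
    exact theta_comp_xi hassoc _ u i a

end Stab
end
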